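/- arXiv:nlin/0512034 — 4 statements merged into one kernel-verified Lean document; each statement's English description precedes it below -/
import Mathlib

section
/- (Ertel's theorem.) Let u, w : ℝ × ℝ³ → ℝ³ be C¹ and θ : ℝ × ℝ³ → ℝ be C². If w is frozen into the flow of u, i.e. ∂ₜw + (u·∇)w = (w·∇)u pointwise, then for all (t,x): ∂ₜ(w·∇θ) + (u·∇)(w·∇θ) = (w·∇)(∂ₜθ + (u·∇)θ); that is, the material derivative D/Dt = ∂ₜ + u·∇ commutes with the directional derivative w·∇ in the sense D/Dt(w·∇θ) = w·∇(Dθ/Dt). -/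
/-!
In space-time, `D/Dt` and `w·∇` are the derivations along the vector fields `U = (1, u)` and
`W = (0, w)`, and the frozen-in condition says exactly that their Lie bracket
`[U, W] = DW·U - DU·W` vanishes. For a `C²` function `θ` the commutator of the two derivations
is the derivative of `θ` along `[U, W]` (symmetry of the second derivative), hence zero.
-/

noncomputable section

/-- Space-time: a point is a pair (t, x) with t ∈ ℝ, x ∈ ℝ³. -/
abbrev Pt : Type := ℝ × (Fin 3 → ℝ)

/-- Material derivative `∂ₜ f + (a·∇)f` of a scalar field `f` along the
velocity field `a`, at the point `z`. -/
def mder (a : Pt → Fin 3 → ℝ) (f : Pt → ℝ) (z : Pt) : ℝ :=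
  fderiv ℝ f z ((1 : ℝ), a z)

/-- Directional (spatial) derivative `(a·∇)f` of a scalar field `f`. -/
def sder (a : Pt → Fin 3 → ℝ) (f : Pt → ℝ) (z : Pt) : ℝ :=
  fderiv ℝ f z ((0 : ℝ), a z)

open VectorField

theorem fderiv_const_prodMk_apply {𝕜 E F : Type*} [NontriviallyNormedField 𝕜]
    [NormedAddCommGroup E] [NormedSpace 𝕜 E] [NormedAddCommGroup F] [NormedSpace 𝕜 F]
    {a : E → F} {z : E} (ha : DifferentiableAt 𝕜 a z) (c : 𝕜) (v : E) :
    fderiv 𝕜 (fun q => (c, a q)) z v = (0, fderiv 𝕜 a z v) := by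
  rw [(differentiableAt_const c).fderiv_prodMk ha]
  simp

theorem lieBracket_eq_zero_of_frozen {u w : Pt → Fin 3 → ℝ} {z : Pt}
    (hu : DifferentiableAt ℝ u z) (hw : DifferentiableAt ℝ w z)
    (hfrozen : ∀ i, mder u (fun q => w q i) z = sder w (fun q => u q i) z) :
    lieBracket ℝ (fun q => ((1 : ℝ), u q)) (fun q => ((0 : ℝ), w q)) z = 0 := by
  have hcomp : fderiv ℝ w z ((1 : ℝ), u z) = fderiv ℝ u z ((0 : ℝ), w z) := by
    ext i
    simpa [mder, sder, fderiv_apply hu, fderiv_apply hw] using hfrozen i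
  simp [lieBracket, fderiv_const_prodMk_apply hu, fderiv_const_prodMk_apply hw, hcomp]

/-- Ertel's theorem: if `w` is frozen into the flow of `u`,
i.e. `∂ₜw + (u·∇)w = (w·∇)u`, then for any C² scalar `θ`,
`D/Dt (w·∇θ) = w·∇(Dθ/Dt)` where `D/Dt = ∂ₜ + u·∇`. -/
theorem ertel_theorem
    (u w : Pt → Fin 3 → ℝ) (θ : Pt → ℝ)
    (hu : ContDiff ℝ 1 u) (hw : ContDiff ℝ 1 w) (hθ : ContDiff ℝ 2 θ)
    (hfrozen : ∀ z i, mder u (fun q => w q i) z = sder w (fun q => u q i) z) :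
    ∀ z, mder u (fun q => sder w θ q) z = sder w (fun q => mder u θ q) z := by
  intro z
  have hud : DifferentiableAt ℝ u z := hu.differentiable one_ne_zero z
  have hwd : DifferentiableAt ℝ w z := hw.differentiable one_ne_zero z
  have hcommutator := fderiv_apply_lieBracket hθ.contDiffAt (by simp)
    ((differentiableAt_const (0 : ℝ)).prodMk hwd) ((differentiableAt_const (1 : ℝ)).prodMk hud)
  rw [lieBracket_eq_zero_of_frozen hud hwd (hfrozen z), map_zero] at hcommutator
  exact sub_eq_zero.1 hcommutator.symm
end
end

section
/- (Ohkitani's relation.) Let u : ℝ × ℝ³ → ℝ³ and p : ℝ × ℝ³ → ℝ be smooth and satisfy the incompressible Euler equations ∂ₜu + (u·∇)u = −∇p with div u = 0, and let ω = curl u. Then the second material derivative of the vorticity satisfies D²ω/Dt² + Pω = 0 pointwise, where D/Dt = ∂ₜ + u·∇ is applied componentwise and P = (∂²p/∂xᵢ∂xⱼ) is the pressure Hessian; equivalently, D(Sω)/Dt = −Pω where S = ½(∇u + (∇u)ᵀ). -/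
noncomputable section

open scoped BigOperators

/-- Spatial partial derivative `∂f/∂xᵢ`. -/
def pd (i : Fin 3) (f : Pt → ℝ) (z : Pt) : ℝ :=
  fderiv ℝ f z ((0 : ℝ), Pi.single i 1)

/-- The vorticity `ω = curl u`. -/
def vort (u : Pt → Fin 3 → ℝ) (z : Pt) : Fin 3 → ℝ :=
  ![pd 1 (fun q => u q 2) z - pd 2 (fun q => u q 1) z,
    pd 2 (fun q => u q 0) z - pd 0 (fun q => u q 2) z,
    pd 0 (fun q => u q 1) z - pd 1 (fun q => u q 0) z]

/-- The strain matrix `S = ½(∇u + (∇u)ᵀ)` applied to a vector `v`. -/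
def strainVec (u : Pt → Fin 3 → ℝ) (z : Pt) (v : Fin 3 → ℝ) : Fin 3 → ℝ :=
  fun i => ∑ j : Fin 3,
    ((pd j (fun q => u q i) z + pd i (fun q => u q j) z) / 2) * v j

/-- The pressure Hessian `P = (∂²p/∂xᵢ∂xⱼ)` applied to a vector `v`. -/
def hessVec (p : Pt → ℝ) (z : Pt) (v : Fin 3 → ℝ) : Fin 3 → ℝ :=
  fun i => ∑ j : Fin 3, pd i (pd j p) z * v j

/-! ### Auxiliary machinery -/

/-- Directional derivative of `f` in the fixed space-time direction `v`. -/
def dd (v : Pt) (f : Pt → ℝ) (z : Pt) : ℝ := fderiv ℝ f z v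

lemma dd_contDiff {f : Pt → ℝ} (hf : ContDiff ℝ (⊤ : ℕ∞) f) (v : Pt) :
    ContDiff ℝ (⊤ : ℕ∞) (dd v f) := by
  have h1 : ContDiff ℝ (⊤ : ℕ∞) (fderiv ℝ f) := hf.fderiv_right (by simp)
  exact (ContinuousLinearMap.apply ℝ ℝ v).contDiff.comp h1

lemma cdiff {f : Pt → ℝ} (hf : ContDiff ℝ (⊤ : ℕ∞) f) (z : Pt) : DifferentiableAt ℝ f z :=
  (hf.differentiable (by simp)) z

lemma dd_fderiv {f : Pt → ℝ} (hf : ContDiff ℝ (⊤ : ℕ∞) f) (v w : Pt) (z : Pt) :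
    dd v (dd w f) z = fderiv ℝ (fderiv ℝ f) z v w := by
  have h2 : DifferentiableAt ℝ (fderiv ℝ f) z :=
    ((hf.fderiv_right (m := (⊤ : ℕ∞)) (by simp)).differentiable (by simp)) z
  have h3 : HasFDerivAt (fun q => dd w f q)
      (((ContinuousLinearMap.apply ℝ ℝ w).comp (fderiv ℝ (fderiv ℝ f) z))) z :=
    (ContinuousLinearMap.apply ℝ ℝ w).hasFDerivAt.comp z h2.hasFDerivAt
  show fderiv ℝ (dd w f) z v = _
  rw [h3.fderiv]
  rfl

lemma dd_comm {f : Pt → ℝ} (hf : ContDiff ℝ (⊤ : ℕ∞) f) (v w : Pt) (z : Pt) :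
    dd v (dd w f) z = dd w (dd v f) z := by
  rw [dd_fderiv hf, dd_fderiv hf]
  exact second_derivative_symmetric
    (fun y => ((hf.differentiable (by simp)) y).hasFDerivAt)
    (((((hf.fderiv_right (m := (⊤ : ℕ∞)) (by simp)).differentiable (by simp))) z).hasFDerivAt) v w

variable {f g : Pt → ℝ} {z : Pt} {v : Pt}

lemma dd_neg (v : Pt) (f : Pt → ℝ) (z : Pt) : dd v (fun q => -f q) z = -dd v f z := by
  unfold dd; rw [fderiv_fun_neg]; simp

lemma dd_sub (hf : DifferentiableAt ℝ f z) (hg : DifferentiableAt ℝ g z) :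
    dd v (fun q => f q - g q) z = dd v f z - dd v g z := by
  unfold dd; rw [fderiv_fun_sub hf hg]; simp

lemma dd_add (hf : DifferentiableAt ℝ f z) (hg : DifferentiableAt ℝ g z) :
    dd v (fun q => f q + g q) z = dd v f z + dd v g z := by
  unfold dd; rw [fderiv_fun_add hf hg]; simp

lemma dd_mul (hf : DifferentiableAt ℝ f z) (hg : DifferentiableAt ℝ g z) :
    dd v (fun q => f q * g q) z = f z * dd v g z + g z * dd v f z := by
  unfold dd; rw [fderiv_fun_mul hf hg]; simp

lemma dd_const_mul (c : ℝ) (hg : DifferentiableAt ℝ g z) :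
    dd v (fun q => c * g q) z = c * dd v g z := by
  unfold dd; rw [fderiv_const_mul hg]; simp

lemma dd_sum {ι : Type*} {s : Finset ι} {F : ι → Pt → ℝ}
    (h : ∀ i ∈ s, DifferentiableAt ℝ (F i) z) :
    dd v (fun q => ∑ i ∈ s, F i q) z = ∑ i ∈ s, dd v (F i) z := by
  unfold dd; rw [fderiv_fun_sum h]; simp

lemma vec_decomp (a : Fin 3 → ℝ) :
    ((1:ℝ), a) = ((1:ℝ), (0:Fin 3 → ℝ))
      + ∑ k : Fin 3, a k • ((0:ℝ), (Pi.single k 1 : Fin 3 → ℝ)) := by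
  have h : ∑ k : Fin 3, a k • ((0:ℝ), (Pi.single k 1 : Fin 3 → ℝ)) = ((0:ℝ), a) := by
    refine Prod.ext ?_ ?_
    · simp [Prod.fst_sum]
    · simp only [Prod.snd_sum, Prod.smul_mk]
      funext j
      simp [Finset.sum_apply, Pi.single_apply]
  rw [h]
  simp [Prod.ext_iff]

lemma dd_lin (a : Fin 3 → ℝ) (f : Pt → ℝ) (q : Pt) :
    dd ((1:ℝ), a) f q = dd ((1:ℝ), (0:Fin 3 → ℝ)) f q
      + ∑ k : Fin 3, a k * dd ((0:ℝ), Pi.single k 1) f q := by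
  unfold dd
  rw [vec_decomp a, map_add, map_sum]
  simp only [map_smul, smul_eq_mul]

lemma mder_dd (u : Pt → Fin 3 → ℝ) (f : Pt → ℝ) (z : Pt) :
    mder u f z = dd ((1:ℝ), u z) f z := rfl

lemma pd_dd (i : Fin 3) (f : Pt → ℝ) : pd i f = dd ((0:ℝ), Pi.single i 1) f := rfl

/-- Commutator of material and spatial derivatives. -/
lemma mder_pd {u : Pt → Fin 3 → ℝ} {f : Pt → ℝ}
    (hu : ContDiff ℝ (⊤ : ℕ∞) u) (hf : ContDiff ℝ (⊤ : ℕ∞) f) (i : Fin 3) (z : Pt) :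
    mder u (pd i f) z
      = pd i (fun q => mder u f q) z
        - ∑ k : Fin 3, pd i (fun q => u q k) z * pd k f z := by
  have hui : ∀ k, ContDiff ℝ (⊤ : ℕ∞) (fun q => u q k) := fun k => contDiff_pi.mp hu k
  have hL : mder u (pd i f) z
      = dd ((0:ℝ), Pi.single i 1) (dd ((1:ℝ), u z) f) z := by
    rw [mder_dd, pd_dd]
    exact dd_comm hf _ _ z
  have hfun : dd ((1:ℝ), u z) f
      = fun q => dd ((1:ℝ), (0:Fin 3 → ℝ)) f q
          + ∑ k : Fin 3, u z k * dd ((0:ℝ), Pi.single k 1) f q :=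
    funext fun q => dd_lin (u z) f q
  have hgfun : (fun q => mder u f q)
      = fun q => dd ((1:ℝ), (0:Fin 3 → ℝ)) f q
          + ∑ k : Fin 3, u q k * dd ((0:ℝ), Pi.single k 1) f q :=
    funext fun q => dd_lin (u q) f q
  have hd0 : DifferentiableAt ℝ (dd ((1:ℝ), (0:Fin 3 → ℝ)) f) z :=
    cdiff (dd_contDiff hf _) z
  have hdk : ∀ k : Fin 3, DifferentiableAt ℝ (dd ((0:ℝ), Pi.single k 1) f) z :=
    fun k => cdiff (dd_contDiff hf _) z
  have hL2 : mder u (pd i f) z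
      = dd ((0:ℝ), Pi.single i 1) (dd ((1:ℝ), (0:Fin 3 → ℝ)) f) z
        + ∑ k : Fin 3, u z k * dd ((0:ℝ), Pi.single i 1)
            (dd ((0:ℝ), Pi.single k 1) f) z := by
    rw [hL, hfun, dd_add hd0 (by
      exact DifferentiableAt.fun_sum fun k _ => ((hdk k).const_mul (u z k)))]
    rw [dd_sum (fun k _ => (hdk k).const_mul (u z k))]
    congr 1
    exact Finset.sum_congr rfl fun k _ => dd_const_mul (u z k) (hdk k)
  have hR2 : pd i (fun q => mder u f q) z
      = dd ((0:ℝ), Pi.single i 1) (dd ((1:ℝ), (0:Fin 3 → ℝ)) f) z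
        + ∑ k : Fin 3, (u z k * dd ((0:ℝ), Pi.single i 1)
            (dd ((0:ℝ), Pi.single k 1) f) z
          + dd ((0:ℝ), Pi.single k 1) f z * pd i (fun q => u q k) z) := by
    rw [hgfun, pd_dd]
    rw [dd_add hd0 (by
      exact DifferentiableAt.fun_sum fun k _ => (cdiff (hui k) z).fun_mul (hdk k))]
    rw [dd_sum (fun k _ => (cdiff (hui k) z).fun_mul (hdk k))]
    congr 1
    exact Finset.sum_congr rfl fun k _ => dd_mul (cdiff (hui k) z) (hdk k)
  rw [hL2, hR2, Finset.sum_add_distrib]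
  have hpdd : ∀ k : Fin 3, pd k f z = dd ((0:ℝ), Pi.single k 1) f z := fun k => rfl
  simp only [hpdd]
  have hmc : ∑ x : Fin 3, dd ((0:ℝ), Pi.single x 1) f z * pd i (fun q => u q x) z
      = ∑ x : Fin 3, pd i (fun q => u q x) z * dd ((0:ℝ), Pi.single x 1) f z :=
    Finset.sum_congr rfl fun k _ => mul_comm _ _
  rw [hmc]
  ring

/-- Smoothness of vorticity components. -/
lemma vort_contDiff {u : Pt → Fin 3 → ℝ} (hu : ContDiff ℝ (⊤ : ℕ∞) u) (j : Fin 3) :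
    ContDiff ℝ (⊤ : ℕ∞) (fun r => vort u r j) := by
  have hui : ∀ k, ContDiff ℝ (⊤ : ℕ∞) (fun q => u q k) := fun k => contDiff_pi.mp hu k
  fin_cases j
  · exact (dd_contDiff (hui 2) _).sub (dd_contDiff (hui 1) _)
  · exact (dd_contDiff (hui 0) _).sub (dd_contDiff (hui 2) _)
  · exact (dd_contDiff (hui 1) _).sub (dd_contDiff (hui 0) _)

/-- The vorticity equation `Dω/Dt = (ω·∇)u`. -/
lemma vort_eq {u : Pt → Fin 3 → ℝ} {p : Pt → ℝ}
    (hu : ContDiff ℝ (⊤ : ℕ∞) u) (hp : ContDiff ℝ (⊤ : ℕ∞) p)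
    (heuler : ∀ z i, mder u (fun q => u q i) z = - pd i p z)
    (hdiv : ∀ z, ∑ i : Fin 3, pd i (fun q => u q i) z = 0)
    (z : Pt) (i : Fin 3) :
    mder u (fun r => vort u r i) z
      = ∑ j : Fin 3, vort u z j * pd j (fun q => u q i) z := by
  have hui : ∀ k, ContDiff ℝ (⊤ : ℕ∞) (fun q => u q k) := fun k => contDiff_pi.mp hu k
  have hef : ∀ k : Fin 3, (fun q => mder u (fun r => u r k) q) = fun q => -pd k p q :=
    fun k => funext fun q => heuler q k
  have hcl : ∀ a b : Fin 3, pd a (pd b p) z = pd b (pd a p) z := fun a b => by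
    rw [pd_dd, pd_dd, pd_dd, pd_dd]; exact dd_comm hp _ _ z
  have hd := hdiv z
  have key : ∀ a b : Fin 3,
      mder u (fun r => pd a (fun q => u q b) r - pd b (fun q => u q a) r) z
        = - pd a (pd b p) z + pd b (pd a p) z
          - ∑ k : Fin 3, pd a (fun q => u q k) z * pd k (fun q => u q b) z
          + ∑ k : Fin 3, pd b (fun q => u q k) z * pd k (fun q => u q a) z := by
    intro a b
    have hdb : DifferentiableAt ℝ (pd a fun q => u q b) z :=
      cdiff (dd_contDiff (hui b) ((0:ℝ), Pi.single a 1)) z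
    have hda : DifferentiableAt ℝ (pd b fun q => u q a) z :=
      cdiff (dd_contDiff (hui a) ((0:ℝ), Pi.single b 1)) z
    rw [mder_dd, dd_sub hdb hda,
      ← mder_dd, ← mder_dd, mder_pd hu (hui b) a z, mder_pd hu (hui a) b z,
      hef b, hef a]
    have h1 : pd a (fun q => -pd b p q) z = - pd a (pd b p) z := dd_neg _ _ _
    have h2 : pd b (fun q => -pd a p q) z = - pd b (pd a p) z := dd_neg _ _ _
    rw [h1, h2]
    ring
  fin_cases i
  · show mder u (fun r => vort u r 0) z = ∑ j : Fin 3, vort u z j * pd j (fun q => u q 0) z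
    have h := key 1 2
    rw [show (fun r => vort u r (0 : Fin 3))
        = fun r => pd 1 (fun q => u q 2) r - pd 2 (fun q => u q 1) r from rfl, h, hcl 1 2]
    simp only [Fin.sum_univ_three] at hd ⊢
    show _ = vort u z 0 * _ + vort u z 1 * _ + vort u z 2 * _
    simp only [vort, Matrix.cons_val_zero, Matrix.cons_val_one, Matrix.head_cons,
      Matrix.cons_val_two, Matrix.tail_cons]
    linear_combination (- (pd 1 (fun q => u q 2) z - pd 2 (fun q => u q 1) z)) * hd
  · show mder u (fun r => vort u r 1) z = ∑ j : Fin 3, vort u z j * pd j (fun q => u q 1) z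
    have h := key 2 0
    rw [show (fun r => vort u r (1 : Fin 3))
        = fun r => pd 2 (fun q => u q 0) r - pd 0 (fun q => u q 2) r from rfl, h, hcl 2 0]
    simp only [Fin.sum_univ_three] at hd ⊢
    show _ = vort u z 0 * _ + vort u z 1 * _ + vort u z 2 * _
    simp only [vort, Matrix.cons_val_zero, Matrix.cons_val_one, Matrix.head_cons,
      Matrix.cons_val_two, Matrix.tail_cons]
    linear_combination (- (pd 2 (fun q => u q 0) z - pd 0 (fun q => u q 2) z)) * hd
  · show mder u (fun r => vort u r 2) z = ∑ j : Fin 3, vort u z j * pd j (fun q => u q 2) z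
    have h := key 0 1
    rw [show (fun r => vort u r (2 : Fin 3))
        = fun r => pd 0 (fun q => u q 1) r - pd 1 (fun q => u q 0) r from rfl, h, hcl 0 1]
    simp only [Fin.sum_univ_three] at hd ⊢
    show _ = vort u z 0 * _ + vort u z 1 * _ + vort u z 2 * _
    simp only [vort, Matrix.cons_val_zero, Matrix.cons_val_one, Matrix.head_cons,
      Matrix.cons_val_two, Matrix.tail_cons]
    linear_combination (- (pd 0 (fun q => u q 1) z - pd 1 (fun q => u q 0) z)) * hd

/-- Ohkitani's relation: for a smooth solution of the
incompressible Euler equations, `D²ω/Dt² + Pω = 0`; equivalently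
`D(Sω)/Dt = −Pω`. -/
theorem ohkitani_relation
    (u : Pt → Fin 3 → ℝ) (p : Pt → ℝ)
    (hu : ContDiff ℝ (⊤ : ℕ∞) u) (hp : ContDiff ℝ (⊤ : ℕ∞) p)
    (heuler : ∀ z i, mder u (fun q => u q i) z = - pd i p z)
    (hdiv : ∀ z, ∑ i : Fin 3, pd i (fun q => u q i) z = 0) :
    (∀ z i, mder u (fun q => mder u (fun r => vort u r i) q) z
        + hessVec p z (vort u z) i = 0) ∧
    (∀ z i, mder u (fun q => strainVec u q (vort u q) i) z
        = - hessVec p z (vort u z) i) := by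
  have hui : ∀ k, ContDiff ℝ (⊤ : ℕ∞) (fun q => u q k) := fun k => contDiff_pi.mp hu k
  have hv := fun z i => vort_eq hu hp heuler hdiv z i
  have hef : ∀ k : Fin 3, (fun q => mder u (fun r => u r k) q) = fun q => -pd k p q :=
    fun k => funext fun q => heuler q k
  have P1 : ∀ z i, mder u (fun q => mder u (fun r => vort u r i) q) z
      + hessVec p z (vort u z) i = 0 := by
    intro z i
    have e1 : (fun q => mder u (fun r => vort u r i) q)
        = fun q => ∑ j : Fin 3, vort u q j * pd j (fun r => u r i) q :=
      funext fun q => hv q i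
    rw [e1, mder_dd]
    have hF : ∀ j ∈ (Finset.univ : Finset (Fin 3)),
        DifferentiableAt ℝ (fun q => vort u q j * pd j (fun r => u r i) q) z :=
      fun j _ =>
        (((vort_contDiff hu j).mul
          (dd_contDiff (hui i) ((0:ℝ), Pi.single j 1))).differentiable (by simp)) z
    rw [dd_sum hF]
    have hsummand : ∀ j : Fin 3,
        dd ((1:ℝ), u z) (fun q => vort u q j * pd j (fun r => u r i) q) z
          = vort u z j * (- pd j (pd i p) z
              - ∑ k : Fin 3, pd j (fun q => u q k) z * pd k (fun q => u q i) z)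
            + pd j (fun r => u r i) z
              * (∑ k : Fin 3, vort u z k * pd k (fun q => u q j) z) := by
      intro j
      have hg : DifferentiableAt ℝ (pd j fun r => u r i) z :=
        cdiff (dd_contDiff (hui i) ((0:ℝ), Pi.single j 1)) z
      have hfj : DifferentiableAt ℝ (fun q => vort u q j) z :=
        cdiff (vort_contDiff hu j) z
      rw [dd_mul hfj hg]
      have hA : dd ((1:ℝ), u z) (pd j (fun r => u r i)) z
          = - pd j (pd i p) z
            - ∑ k : Fin 3, pd j (fun q => u q k) z * pd k (fun q => u q i) z := by
        rw [← mder_dd, mder_pd hu (hui i) j z, hef i]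
        have hn : pd j (fun q => -pd i p q) z = - pd j (pd i p) z := dd_neg _ _ _
        rw [hn]
      have hB : dd ((1:ℝ), u z) (fun r => vort u r j) z
          = ∑ k : Fin 3, vort u z k * pd k (fun q => u q j) z := by
        rw [← mder_dd]; exact hv z j
      rw [hA, hB]
    simp only [hsummand]
    have hcl : ∀ j : Fin 3, pd i (pd j p) z = pd j (pd i p) z := fun j => by
      rw [pd_dd, pd_dd, pd_dd, pd_dd]; exact dd_comm hp _ _ z
    simp only [hessVec, hcl]
    simp only [Fin.sum_univ_three]
    ring
  refine ⟨P1, ?_⟩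
  intro z i
  have e2' : ∀ q, strainVec u q (vort u q) i
      = ∑ j : Fin 3, vort u q j * pd j (fun r => u r i) q := by
    intro q
    fin_cases i
    · show strainVec u q (vort u q) 0 = ∑ j : Fin 3, vort u q j * pd j (fun r => u r 0) q
      simp only [strainVec, vort, Fin.sum_univ_three, Matrix.cons_val_zero,
        Matrix.cons_val_one, Matrix.head_cons, Matrix.cons_val_two, Matrix.tail_cons]
      ring
    · show strainVec u q (vort u q) 1 = ∑ j : Fin 3, vort u q j * pd j (fun r => u r 1) q
      simp only [strainVec, vort, Fin.sum_univ_three, Matrix.cons_val_zero,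
        Matrix.cons_val_one, Matrix.head_cons, Matrix.cons_val_two, Matrix.tail_cons]
      ring
    · show strainVec u q (vort u q) 2 = ∑ j : Fin 3, vort u q j * pd j (fun r => u r 2) q
      simp only [strainVec, vort, Fin.sum_univ_three, Matrix.cons_val_zero,
        Matrix.cons_val_one, Matrix.head_cons, Matrix.cons_val_two, Matrix.tail_cons]
      ring
  have e2 : (fun q => strainVec u q (vort u q) i)
      = fun q => mder u (fun r => vort u r i) q := by
    funext q
    rw [hv q i, e2' q]
  rw [e2]
  have := P1 z i
  linarith
end
end

section
/- Let α, χ : ℝ → ℝ be differentiable with χ(t) ≥ 0, and let α_p, g, X : ℝ → ℝ satisfy |g(t)| ≤ X(t) for all t. Suppose α′ = χ² − α² − α_p and χ′ = −2αχ − g (the component form of the quaternion Riccati equation), and that ρ(t) := √(α(t)² + χ(t)²) > 0 on an interval. Then on that interval ρ is differentiable and satisfies the inequality ρ′ ≤ −α ρ + (|α||α_p| + χ X)/ρ. -/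
/-!
Differentiating `ρ² = α² + χ²` along the Riccati system gives
`ρ ρ′ = α α′ + χ χ′ = -α ρ² - (α α_p + χ g)`, and the coupling term is bounded by
`|α| |α_p| + χ X` because `χ ≥ 0` and `|g| ≤ X`.
-/

open Real

theorem HasDerivAt.sqrt_sq_add_sq {f g : ℝ → ℝ} {f' g' t : ℝ}
    (hf : HasDerivAt f f' t) (hg : HasDerivAt g g' t) (h : f t ^ 2 + g t ^ 2 ≠ 0) :
    HasDerivAt (fun s => √(f s ^ 2 + g s ^ 2))
      ((f t * f' + g t * g') / √(f t ^ 2 + g t ^ 2)) t := by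
  have hsq : HasDerivAt (fun s => f s ^ 2 + g s ^ 2) (2 * f t * f' + 2 * g t * g') t :=
    ((hf.fun_pow 2).fun_add (hg.fun_pow 2)).congr_deriv (by push_cast; ring)
  exact (hsq.sqrt h).congr_deriv (by field_simp)

theorem neg_mul_add_mul_le_abs_mul_add_mul {a b c d x : ℝ} (hc : 0 ≤ c) (hd : |d| ≤ x) :
    -(a * b + c * d) ≤ |a| * |b| + c * x := by
  have hab : -(a * b) ≤ |a| * |b| := abs_mul a b ▸ neg_le_abs _
  have hcd : -(c * d) ≤ c * x :=
    calc -(c * d) = c * -d := by ring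
      _ ≤ c * x := mul_le_mul_of_nonneg_left ((neg_le_abs d).trans hd) hc
  linarith

/-- if `α′ = χ² − α² − α_p`, `χ′ = −2αχ − g` with `χ ≥ 0` and
`|g| ≤ X`, and `ρ = √(α² + χ²) > 0` on an interval, then on that interval `ρ`
is differentiable and `ρ′ ≤ −αρ + (|α||α_p| + χX)/ρ`. -/
theorem riccati_magnitude_inequality
    (α χ αp g X : ℝ → ℝ) (a b : ℝ)
    (hα : Differentiable ℝ α) (hχ : Differentiable ℝ χ)
    (hχpos : ∀ t, 0 ≤ χ t)
    (hgX : ∀ t, |g t| ≤ X t)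
    (hα' : ∀ t, deriv α t = χ t ^ 2 - α t ^ 2 - αp t)
    (hχ' : ∀ t, deriv χ t = -2 * α t * χ t - g t)
    (hρpos : ∀ t ∈ Set.Ioo a b, 0 < Real.sqrt (α t ^ 2 + χ t ^ 2)) :
    ∀ t ∈ Set.Ioo a b,
      DifferentiableAt ℝ (fun s => Real.sqrt (α s ^ 2 + χ s ^ 2)) t ∧
      deriv (fun s => Real.sqrt (α s ^ 2 + χ s ^ 2)) t ≤
        -(α t) * Real.sqrt (α t ^ 2 + χ t ^ 2) +
          (|α t| * |αp t| + χ t * X t) / Real.sqrt (α t ^ 2 + χ t ^ 2) := by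
  intro t ht
  have hρ' := (hα t).hasDerivAt.sqrt_sq_add_sq (hχ t).hasDerivAt (sqrt_pos.mp (hρpos t ht)).ne'
  refine ⟨hρ'.differentiableAt, ?_⟩
  rw [hρ'.deriv, hα' t, hχ' t]
  have hρsq : √(α t ^ 2 + χ t ^ 2) ^ 2 = α t ^ 2 + χ t ^ 2 := sq_sqrt (by positivity)
  calc (α t * (χ t ^ 2 - α t ^ 2 - αp t) + χ t * (-2 * α t * χ t - g t)) / √(α t ^ 2 + χ t ^ 2)
      = -(α t) * √(α t ^ 2 + χ t ^ 2) +
          -(α t * αp t + χ t * g t) / √(α t ^ 2 + χ t ^ 2) := by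
        field_simp
        rw [hρsq]
        ring
    _ ≤ _ := by
        gcongr
        exact neg_mul_add_mul_le_abs_mul_add_mul (hχpos t) (hgX t)
end

section
/- (MHD Ertel relation.) Let u, B : ℝ × ℝ³ → ℝ³ and p : ℝ × ℝ³ → ℝ be smooth and satisfy the ideal incompressible MHD equations ∂ₜu + (u·∇)u = (B·∇)B − ∇p and ∂ₜB + (u·∇)B = (B·∇)u with div u = 0. Set v⁺ = u + B, v⁻ = u − B and define the stretching vectors σ^± = (B·∇)v^±. Then for each choice of sign, ∂ₜσ^± + (v^∓·∇)σ^± = −P B pointwise, where P = (∂²p/∂xᵢ∂xⱼ) is the Hessian of p; i.e., D^∓σ^±/Dt = −PB with D^∓/Dt = ∂ₜ + v^∓·∇. -/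
noncomputable section

open scoped BigOperators

lemma single_pt (f : Pt → ℝ) (z : Pt) (j : Fin 3) (c : ℝ) :
    fderiv ℝ f z ((0:ℝ), Pi.single j c) = c * pd j f z := by
  have h : (((0:ℝ), Pi.single j c) : Pt) = c • (((0:ℝ), Pi.single j 1) : Pt) := by
    rw [Prod.smul_mk]
    simp [← Pi.single_smul]
  rw [h, map_smul, smul_eq_mul, pd]

lemma expand_fderiv (f : Pt → ℝ) (z : Pt) (t : ℝ) (w : Fin 3 → ℝ) :
    fderiv ℝ f z (t, w)
      = t * fderiv ℝ f z ((1:ℝ), (0 : Fin 3 → ℝ))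
        + ∑ j : Fin 3, w j * pd j f z := by
  have h : ((t, w) : Pt)
      = t • (((1:ℝ), (0 : Fin 3 → ℝ)) : Pt)
        + ∑ j : Fin 3, (((0:ℝ), Pi.single j (w j)) : Pt) := by
    ext
    · simp [Prod.fst_sum]
    · simp [Prod.snd_sum, Finset.sum_apply, Pi.single_apply]
  rw [h, map_add, map_smul, map_sum, smul_eq_mul]
  simp [single_pt]

lemma pd_contDiff {f : Pt → ℝ} (hf : ContDiff ℝ (⊤ : ℕ∞) f) (j : Fin 3) :
    ContDiff ℝ (⊤ : ℕ∞) (pd j f) :=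
  (ContinuousLinearMap.apply ℝ ℝ (((0:ℝ), Pi.single j 1) : Pt)).contDiff.comp
    (hf.fderiv_right (by simp))

lemma fderiv_pd {f : Pt → ℝ} (hf : ContDiff ℝ (⊤ : ℕ∞) f) (j : Fin 3) (z w : Pt) :
    fderiv ℝ (pd j f) z w = fderiv ℝ (fderiv ℝ f) z w ((0:ℝ), Pi.single j 1) := by
  have hc : DifferentiableAt ℝ (fderiv ℝ f) z :=
    (hf.fderiv_right (m := 1) (WithTop.coe_le_coe.mpr le_top)).differentiable one_ne_zero z
  have h := fderiv_clm_apply hc (differentiableAt_const (((0:ℝ), Pi.single j (1:ℝ)) : Pt))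
  rw [show (pd j f) = fun y => (fderiv ℝ f y) (((0:ℝ), Pi.single j 1) : Pt) from rfl, h]
  simp

lemma snd_symm {f : Pt → ℝ} (hf : ContDiff ℝ (⊤ : ℕ∞) f) (z v w : Pt) :
    fderiv ℝ (fderiv ℝ f) z v w = fderiv ℝ (fderiv ℝ f) z w v :=
  (hf.contDiffAt.isSymmSndFDerivAt (by rw [minSmoothness_of_isRCLikeNormedField]; exact WithTop.coe_le_coe.mpr le_top)) v w

lemma fderiv_app {v : Pt → Fin 3 → ℝ} {z : Pt} (hv : DifferentiableAt ℝ v z)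
    (k : Fin 3) (w : Pt) :
    fderiv ℝ v z w k = fderiv ℝ (fun q => v q k) z w := by
  have h := ((ContinuousLinearMap.proj (R := ℝ) (φ := fun _ : Fin 3 => ℝ)
      k).hasFDerivAt.comp z hv.hasFDerivAt).fderiv
  rw [show (fun q => v q k) = (ContinuousLinearMap.proj (R := ℝ)
      (φ := fun _ : Fin 3 => ℝ) k) ∘ v from rfl, h]
  rfl

lemma master (B v : Pt → Fin 3 → ℝ) (φ p : Pt → ℝ) (i : Fin 3)
    (hB : ContDiff ℝ (⊤ : ℕ∞) B) (hv : ContDiff ℝ (⊤ : ℕ∞) v) (hφ : ContDiff ℝ (⊤ : ℕ∞) φ)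
    (hp : ContDiff ℝ (⊤ : ℕ∞) p)
    (H1 : ∀ q, fderiv ℝ φ q ((1:ℝ), v q) = - pd i p q)
    (H2 : ∀ q j, fderiv ℝ (fun r => B r j) q ((1:ℝ), v q)
        = ∑ k : Fin 3, B q k * pd k (fun r => v r j) q)
    (z : Pt) :
    fderiv ℝ (fun q => fderiv ℝ φ q ((0:ℝ), B q)) z ((1:ℝ), v z)
      = - ∑ j : Fin 3, pd i (pd j p) z * B z j := by
  have hBj : ∀ j, ContDiff ℝ (⊤ : ℕ∞) (fun q => B q j) := fun j => contDiff_pi.mp hB j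
  have hvd : DifferentiableAt ℝ v z := (hv.differentiable (by simp)) z
  -- key second-derivative computation
  have hkey : ∀ j : Fin 3, fderiv ℝ (pd j φ) z ((1:ℝ), v z)
      = - pd j (pd i p) z - ∑ k : Fin 3, pd j (fun r => v r k) z * pd k φ z := by
    intro j
    rw [fderiv_pd hφ j, snd_symm hφ]
    have hm : DifferentiableAt ℝ (fun q => (((1:ℝ), v q) : Pt)) z :=
      (differentiableAt_const (1:ℝ)).prodMk hvd
    have hc : DifferentiableAt ℝ (fderiv ℝ φ) z :=
      (hφ.fderiv_right (m := 1) (WithTop.coe_le_coe.mpr le_top)).differentiable one_ne_zero z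
    have hclm := fderiv_clm_apply hc hm
    have heq : (fun q => fderiv ℝ φ q ((1:ℝ), v q)) = fun q => - pd i p q := funext H1
    rw [heq] at hclm
    have happ := congrArg (fun (L : Pt →L[ℝ] ℝ) => L ((0:ℝ), Pi.single j 1)) hclm
    simp only [ContinuousLinearMap.add_apply, ContinuousLinearMap.flip_apply,
      ContinuousLinearMap.comp_apply] at happ
    have e1 : fderiv ℝ (fun q => - pd i p q) z ((0:ℝ), Pi.single j 1)
        = - pd j (pd i p) z := by
      rw [fderiv_fun_neg]; simp [pd]
    have e2 : fderiv ℝ (fun q => (((1:ℝ), v q) : Pt)) z ((0:ℝ), Pi.single j 1)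
        = ((0:ℝ), fderiv ℝ v z ((0:ℝ), Pi.single j 1)) := by
      rw [DifferentiableAt.fderiv_prodMk (differentiableAt_const _) hvd]
      simp
    have e3 : fderiv ℝ φ z ((0:ℝ), fderiv ℝ v z ((0:ℝ), Pi.single j 1))
        = ∑ k : Fin 3, pd j (fun r => v r k) z * pd k φ z := by
      rw [expand_fderiv]
      simp only [zero_mul, zero_add]
      refine Finset.sum_congr rfl fun k _ => ?_
      rw [fderiv_app hvd k]
      rfl
    rw [e1, e2, e3] at happ
    linarith [happ]
  -- rewrite the stretching vector in coordinates
  have hσ : (fun q => fderiv ℝ φ q ((0:ℝ), B q))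
      = fun q => ∑ j : Fin 3, B q j * pd j φ q := by
    funext q; rw [expand_fderiv]; simp
  have hprod_diff : ∀ j : Fin 3, DifferentiableAt ℝ (fun q => B q j * pd j φ q) z :=
    fun j => (((hBj j).differentiable (by simp)) z).mul
      (((pd_contDiff hφ j).differentiable (by simp)) z)
  rw [hσ, fderiv_fun_sum (fun j _ => hprod_diff j), ContinuousLinearMap.sum_apply]
  have hterm : ∀ j : Fin 3, fderiv ℝ (fun q => B q j * pd j φ q) z ((1:ℝ), v z)
      = (∑ k : Fin 3, B z k * pd k (fun r => v r j) z) * pd j φ z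
        + B z j * (- pd j (pd i p) z - ∑ k : Fin 3, pd j (fun r => v r k) z * pd k φ z) := by
    intro j
    rw [fderiv_fun_mul (((hBj j).differentiable (by simp)) z)
      (((pd_contDiff hφ j).differentiable (by simp)) z)]
    simp only [ContinuousLinearMap.add_apply, ContinuousLinearMap.smul_apply, smul_eq_mul]
    rw [hkey j, H2 z j]
    ring
  rw [Finset.sum_congr rfl (fun j _ => hterm j)]
  have hps : ∀ j : Fin 3, pd j (pd i p) z = pd i (pd j p) z := by
    intro j
    have a1 := fderiv_pd hp i z ((0:ℝ), Pi.single j 1)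
    have a2 := fderiv_pd hp j z ((0:ℝ), Pi.single i 1)
    have : pd j (pd i p) z = fderiv ℝ (pd i p) z ((0:ℝ), Pi.single j 1) := rfl
    rw [this, a1, snd_symm hp, ← a2]
    rfl
  have hcancel : ∑ j : Fin 3, (∑ k : Fin 3, B z k * pd k (fun r => v r j) z) * pd j φ z
      = ∑ j : Fin 3, B z j * ∑ k : Fin 3, pd j (fun r => v r k) z * pd k φ z := by
    simp only [Finset.sum_mul, Finset.mul_sum]
    rw [Finset.sum_comm]
    exact Finset.sum_congr rfl fun j _ => Finset.sum_congr rfl fun k _ => by ring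
  have hfin : ∀ j : Fin 3,
      (∑ k : Fin 3, B z k * pd k (fun r => v r j) z) * pd j φ z
        + B z j * (- pd j (pd i p) z - ∑ k : Fin 3, pd j (fun r => v r k) z * pd k φ z)
      = ((∑ k : Fin 3, B z k * pd k (fun r => v r j) z) * pd j φ z
          - B z j * ∑ k : Fin 3, pd j (fun r => v r k) z * pd k φ z)
        - pd i (pd j p) z * B z j := by
    intro j; rw [← hps j]; ring
  rw [Finset.sum_congr rfl (fun j _ => hfin j), Finset.sum_sub_distrib,
    Finset.sum_sub_distrib, hcancel, sub_self, zero_sub]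

lemma split_sub (f : Pt → ℝ) (q : Pt) (a b : Fin 3 → ℝ) :
    fderiv ℝ f q ((1:ℝ), a - b)
      = fderiv ℝ f q ((1:ℝ), a) - fderiv ℝ f q ((0:ℝ), b) := by
  rw [← map_sub, Prod.mk_sub_mk, sub_zero]

lemma split_add (f : Pt → ℝ) (q : Pt) (a b : Fin 3 → ℝ) :
    fderiv ℝ f q ((1:ℝ), a + b)
      = fderiv ℝ f q ((1:ℝ), a) + fderiv ℝ f q ((0:ℝ), b) := by
  rw [← map_add, Prod.mk_add_mk, add_zero]

/-- MHD Ertel relation: for smooth solutions of ideal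
incompressible MHD, the Elsasser stretching vectors `σ± = (B·∇)v±` satisfy
`∂ₜσ± + (v∓·∇)σ± = −PB`, i.e. `D∓σ±/Dt = −PB`. -/
theorem MHD_ertel_relation
    (u B : Pt → Fin 3 → ℝ) (p : Pt → ℝ)
    (hu : ContDiff ℝ (⊤ : ℕ∞) u) (hB : ContDiff ℝ (⊤ : ℕ∞) B) (hp : ContDiff ℝ (⊤ : ℕ∞) p)
    (hmom : ∀ z i, mder u (fun q => u q i) z
      = sder B (fun q => B q i) z - pd i p z)
    (hind : ∀ z i, mder u (fun q => B q i) z = sder B (fun q => u q i) z)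
    (hdiv : ∀ z, ∑ i : Fin 3, pd i (fun q => u q i) z = 0) :
    ∀ z i,
      mder (fun q => u q - B q)
          (fun q => sder B (fun r => u r i + B r i) q) z
        = - hessVec p z (B z) i ∧
      mder (fun q => u q + B q)
          (fun q => sder B (fun r => u r i - B r i) q) z
        = - hessVec p z (B z) i := by
  intro z i
  have hui : ∀ k, ContDiff ℝ (⊤ : ℕ∞) (fun q => u q k) := fun k => contDiff_pi.mp hu k
  have hBi : ∀ k, ContDiff ℝ (⊤ : ℕ∞) (fun q => B q k) := fun k => contDiff_pi.mp hB k
  have hud : ∀ (k : Fin 3) q, DifferentiableAt ℝ (fun r => u r k) q :=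
    fun k q => ((hui k).differentiable (by simp)) q
  have hBd : ∀ (k : Fin 3) q, DifferentiableAt ℝ (fun r => B r k) q :=
    fun k q => ((hBi k).differentiable (by simp)) q
  constructor
  · -- σ⁺ advected by v⁻ = u − B
    have H1 : ∀ q, fderiv ℝ (fun r => u r i + B r i) q ((1:ℝ), u q - B q)
        = - pd i p q := by
      intro q
      have h1 := hmom q i
      have h2 := hind q i
      simp only [mder, sder] at h1 h2
      rw [split_sub, fderiv_fun_add (hud i q) (hBd i q)]
      simp only [ContinuousLinearMap.add_apply]
      linarith [h1, h2]
    have H2 : ∀ q (j : Fin 3), fderiv ℝ (fun r => B r j) q ((1:ℝ), u q - B q)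
        = ∑ k : Fin 3, B q k * pd k (fun r => u r j - B r j) q := by
      intro q j
      have h2 := hind q j
      simp only [mder, sder] at h2
      rw [split_sub, h2, ← ContinuousLinearMap.sub_apply, ← fderiv_fun_sub (hud j q) (hBd j q),
        expand_fderiv]
      simp
    exact master B (fun q => u q - B q) (fun r => u r i + B r i) p i hB (hu.sub hB)
      ((hui i).add (hBi i)) hp H1 H2 z
  · -- σ⁻ advected by v⁺ = u + B
    have H1 : ∀ q, fderiv ℝ (fun r => u r i - B r i) q ((1:ℝ), u q + B q)
        = - pd i p q := by
      intro q
      have h1 := hmom q i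
      have h2 := hind q i
      simp only [mder, sder] at h1 h2
      rw [split_add, fderiv_fun_sub (hud i q) (hBd i q)]
      simp only [ContinuousLinearMap.sub_apply]
      linarith [h1, h2]
    have H2 : ∀ q (j : Fin 3), fderiv ℝ (fun r => B r j) q ((1:ℝ), u q + B q)
        = ∑ k : Fin 3, B q k * pd k (fun r => u r j + B r j) q := by
      intro q j
      have h2 := hind q j
      simp only [mder, sder] at h2
      rw [split_add, h2, ← ContinuousLinearMap.add_apply, ← fderiv_fun_add (hud j q) (hBd j q),
        expand_fderiv]
      simp
    exact master B (fun q => u q + B q) (fun r => u r i - B r i) p i hB (hu.add hB)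
      ((hui i).sub (hBi i)) hp H1 H2 z
end
end
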